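/- If p is a probability vector such that the Lyapunov exponent ∫ log|T′| dμ_p is infinite, then for every λ > 0 the set E_λ has full μ_p-measure: μ_p(E_λ) = 1. -/

import Mathlib

open MeasureTheory Filter Set
open scoped ENNReal

instance : MeasurableSpace ℕ+ := ⊤

/-- The Gauss map `T x = 1/x - ⌊1/x⌋` (with `T 0 = 0`). -/
noncomputable def gaussMap (x : ℝ) : ℝ := if x = 0 then 0 else Int.fract x⁻¹

/-- Finite continued fraction approximants: `cfApprox n a` is the value of the
continued fraction `1/(a 0 + 1/(a 1 + ⋯))` truncated after `n` levels. -/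
noncomputable def cfApprox : ℕ → (ℕ → ℕ+) → ℝ
  | 0, _ => 0
  | n + 1, a => (((a 0 : ℕ) : ℝ) + cfApprox n (fun k => a (k + 1)))⁻¹

/-- The continued fraction coding map `Π : ℕ^ℕ → [0,1] ∖ ℚ`. -/
noncomputable def cfVal (a : ℕ → ℕ+) : ℝ := limUnder atTop (fun n => cfApprox n a)

/-- `p` is a countable probability vector `(p_n)_{n ≥ 1}`. -/
def IsProbVec (p : ℕ+ → ℝ) : Prop := (∀ n, 0 ≤ p n) ∧ HasSum p 1

/-- `m` is the Bernoulli product measure on `ℕ^ℕ` with weights `p`: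
it assigns to each cylinder the product of the weights of its digits. -/
def IsBernoulli (p : ℕ+ → ℝ) (m : Measure (ℕ → ℕ+)) : Prop :=
  ∀ (n : ℕ) (i : ℕ → ℕ+),
    m {a | ∀ k < n, a k = i k} = ENNReal.ofReal (∏ k ∈ Finset.range n, p (i k))

/-- Hausdorff dimension of a measure: `inf { dim_H A : μ A = 1 }`. -/
noncomputable def dimMeasure (μ : Measure ℝ) : ℝ≥0∞ :=
  ⨅ (A : Set ℝ) (_ : μ A = 1), dimH A


/-- The `k`-th continued fraction digit of `x`: `i_{k+1} = ⌊1/(T^k x)⌋`. -/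
noncomputable def cfDigit (x : ℝ) (k : ℕ) : ℕ := ⌊(gaussMap^[k] x)⁻¹⌋₊

/-- `J_n(x)`: the level-`n` projected cylinder containing `x`, i.e. the set of
irrationals of `(0,1)` whose first `n` continued fraction digits agree with those of `x`. -/
def levelCyl (n : ℕ) (x : ℝ) : Set ℝ :=
  {y | y ∈ Set.Ioo (0 : ℝ) 1 ∧ Irrational y ∧ ∀ k < n, cfDigit y k = cfDigit x k}

/-- The set `E_λ = ⋂_j ⋃_{n ≥ j} { x ∈ (0,1) : |J_n(x)| ≤ exp (-λ n) }`. -/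
def Eset (lam : ℝ) : Set ℝ :=
  {x | x ∈ Set.Ioo (0 : ℝ) 1 ∧ Irrational x ∧
    ∀ j : ℕ, ∃ n, j ≤ n ∧ Metric.diam (levelCyl n x) ≤ Real.exp (-lam * n)}

/-!
Under `m` the digits `a k` are i.i.d. with law `p`, and `-log x ≤ log 2 + log a₀` for
`x = [a₀; a₁, …]`, so an infinite Lyapunov exponent means `∫ log a₀ dm = ∞`. Summing the tail
probabilities, `∑ₖ m {λ k ≤ log a k} = ∞`, and the second Borel–Cantelli lemma gives
`a k ≥ exp (λ k)` for infinitely many `k`, almost surely. Every inverse branch `t ↦ 1 / (d + t)`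
of the Gauss map is `1 / d²`-Lipschitz on `[0, 1]`, and `J_{k+1}(x)` is the image of a level-one
cylinder with digit `a k` under `k` such branches, so
`|J_{k+1}(x)| ≤ 1 / (a k)² ≤ exp (-2 λ k) ≤ exp (-λ (k + 1))` once `k ≥ 1`.
-/

open ProbabilityTheory

lemma one_le_pnat_cast (i : ℕ+) : (1 : ℝ) ≤ ((i : ℕ) : ℝ) := by exact_mod_cast i.pos

lemma abs_inv_add_sub_inv_add {d z w : ℝ} (hz : 0 < d + z) (hw : 0 < d + w) :
    |(d + z)⁻¹ - (d + w)⁻¹| = |z - w| / ((d + z) * (d + w)) := by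
  rw [inv_sub_inv hz.ne' hw.ne', abs_div, abs_mul, abs_of_pos hz, abs_of_pos hw, abs_sub_comm]
  ring_nf

lemma abs_inv_add_sub_inv_add_le {d z w : ℝ} (hd : 0 < d) (hz : 0 ≤ z) (hw : 0 ≤ w) :
    |(d + z)⁻¹ - (d + w)⁻¹| ≤ |z - w| / d ^ 2 := by
  rw [abs_inv_add_sub_inv_add (by positivity) (by positivity)]
  gcongr
  nlinarith

lemma abs_inv_add_inv_add_sub_le {d e z w : ℝ} (hd : 1 ≤ d) (he : 1 ≤ e) (hz : 0 ≤ z)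
    (hw : 0 ≤ w) :
    |(d + (e + z)⁻¹)⁻¹ - (d + (e + w)⁻¹)⁻¹| ≤ |z - w| / 4 := by
  have hez : 0 < e + z := by linarith
  have hew : 0 < e + w := by linarith
  -- two steps of the recursion contract by `1 / 4` because `t * (d + t⁻¹) = d * t + 1 ≥ 2`
  have two_le : ∀ t, 1 ≤ t → 2 ≤ t * (d + t⁻¹) := fun t ht => by
    rw [mul_add, mul_inv_cancel₀ (by positivity)]; nlinarith
  rw [abs_inv_add_sub_inv_add (by positivity) (by positivity), abs_inv_add_sub_inv_add hez hew,
    div_div]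
  refine div_le_div_of_nonneg_left (abs_nonneg _) (by norm_num) ?_
  nlinarith [two_le (e + z) (by linarith), two_le (e + w) (by linarith)]

noncomputable def cfTail : ℕ → (ℕ → ℕ+) → ℝ → ℝ
  | 0, _, z => z
  | n + 1, a, z => (((a 0 : ℕ) : ℝ) + cfTail n (fun k => a (k + 1)) z)⁻¹

lemma inv_pnat_add_mem_Icc (i : ℕ+) {z : ℝ} (hz : z ∈ Icc (0 : ℝ) 1) :
    (((i : ℕ) : ℝ) + z)⁻¹ ∈ Icc (0 : ℝ) 1 :=
  ⟨by have := hz.1; positivity, inv_le_one_of_one_le₀ (by linarith [one_le_pnat_cast i, hz.1])⟩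

lemma cfTail_mem_Icc (n : ℕ) (a : ℕ → ℕ+) {z : ℝ} (hz : z ∈ Icc (0 : ℝ) 1) :
    cfTail n a z ∈ Icc (0 : ℝ) 1 := by
  induction n generalizing a with
  | zero => exact hz
  | succ n ih => exact inv_pnat_add_mem_Icc _ (ih _)

lemma abs_cfTail_sub_le : ∀ (n : ℕ) (a : ℕ → ℕ+) {z w : ℝ}, z ∈ Icc (0 : ℝ) 1 →
    w ∈ Icc (0 : ℝ) 1 → |cfTail n a z - cfTail n a w| ≤ 2 * (1 / 2) ^ n * |z - w|
  | 0, _, z, w, _, _ => by simp [cfTail]; linarith [abs_nonneg (z - w)]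
  | 1, a, z, w, hz, hw => by
    calc |cfTail 1 a z - cfTail 1 a w| ≤ |z - w| / ((a 0 : ℕ) : ℝ) ^ 2 :=
          abs_inv_add_sub_inv_add_le (by positivity) hz.1 hw.1
      _ ≤ |z - w| := div_le_self (abs_nonneg _) (one_le_pow₀ (one_le_pnat_cast _))
      _ = 2 * (1 / 2) ^ 1 * |z - w| := by ring
  | n + 2, a, z, w, hz, hw => by
    have ih := abs_cfTail_sub_le n (fun k => a (k + 2)) hz hw
    calc |cfTail (n + 2) a z - cfTail (n + 2) a w|
        ≤ |cfTail n (fun k => a (k + 2)) z - cfTail n (fun k => a (k + 2)) w| / 4 :=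
          abs_inv_add_inv_add_sub_le (one_le_pnat_cast _) (one_le_pnat_cast _)
            (cfTail_mem_Icc _ _ hz).1 (cfTail_mem_Icc _ _ hw).1
      _ ≤ 2 * (1 / 2) ^ (n + 2) * |z - w| := by rw [pow_add]; linarith

lemma cfApprox_eq_cfTail (n : ℕ) (a : ℕ → ℕ+) : cfApprox n a = cfTail n a 0 := by
  induction n generalizing a with
  | zero => rfl
  | succ n ih => simp only [cfApprox, cfTail, ih]

lemma cfApprox_succ_eq_cfTail (n : ℕ) (a : ℕ → ℕ+) :
    cfApprox (n + 1) a = cfTail n a (((a n : ℕ) : ℝ))⁻¹ := by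
  induction n generalizing a with
  | zero => simp [cfApprox, cfTail]
  | succ n ih => simp only [cfApprox, cfTail, ← ih]

lemma cauchySeq_cfApprox (a : ℕ → ℕ+) : CauchySeq (fun n => cfApprox n a) := by
  refine cauchySeq_of_le_geometric (1 / 2 : ℝ) 2 (by norm_num) fun n => ?_
  have h := abs_cfTail_sub_le n a (z := 0) (w := ((a n : ℕ) : ℝ)⁻¹) (by simp)
    ⟨by positivity, inv_le_one_of_one_le₀ (one_le_pnat_cast _)⟩
  rw [Real.dist_eq, cfApprox_eq_cfTail, cfApprox_succ_eq_cfTail]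
  refine h.trans (mul_le_of_le_one_right (by positivity) ?_)
  rw [zero_sub, abs_neg, abs_inv, Nat.abs_cast]
  exact inv_le_one_of_one_le₀ (one_le_pnat_cast _)

lemma tendsto_cfApprox (a : ℕ → ℕ+) : Tendsto (fun n => cfApprox n a) atTop (nhds (cfVal a)) :=
  (cauchySeq_cfApprox a).tendsto_limUnder

lemma cfVal_mem_Icc (a : ℕ → ℕ+) : cfVal a ∈ Icc (0 : ℝ) 1 :=
  isClosed_Icc.mem_of_tendsto (tendsto_cfApprox a) (Eventually.of_forall fun n => by
    simpa [cfApprox_eq_cfTail] using cfTail_mem_Icc n a (z := 0) (by simp))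

lemma cfVal_eq_inv_add (a : ℕ → ℕ+) :
    cfVal a = (((a 0 : ℕ) : ℝ) + cfVal (fun k => a (k + 1)))⁻¹ := by
  refine tendsto_nhds_unique ((tendsto_cfApprox a).comp (tendsto_add_atTop_nat 1)) ?_
  refine ((tendsto_const_nhds.add (tendsto_cfApprox _)).inv₀ ?_)
  linarith [one_le_pnat_cast (a 0), (cfVal_mem_Icc fun k => a (k + 1)).1]

lemma cfVal_pos (a : ℕ → ℕ+) : 0 < cfVal a := by
  have := (cfVal_mem_Icc fun k => a (k + 1)).1
  rw [cfVal_eq_inv_add]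
  positivity

lemma cfVal_mem_Ioo (a : ℕ → ℕ+) : cfVal a ∈ Ioo (0 : ℝ) 1 := by
  refine ⟨cfVal_pos a, ?_⟩
  rw [cfVal_eq_inv_add]
  exact inv_lt_one_of_one_lt₀ (by linarith [one_le_pnat_cast (a 0), cfVal_pos fun k => a (k + 1)])

lemma gaussMap_cfVal (a : ℕ → ℕ+) : gaussMap (cfVal a) = cfVal (fun k => a (k + 1)) := by
  obtain ⟨h0, h1⟩ := cfVal_mem_Ioo fun k => a (k + 1)
  rw [gaussMap, if_neg (cfVal_pos a).ne', cfVal_eq_inv_add a, inv_inv,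
    ← Int.cast_natCast, Int.fract_intCast_add, Int.fract_eq_self.2 ⟨h0.le, h1⟩]

lemma iterate_gaussMap_cfVal (k : ℕ) (a : ℕ → ℕ+) :
    gaussMap^[k] (cfVal a) = cfVal (fun j => a (j + k)) := by
  induction k generalizing a with
  | zero => rfl
  | succ k ih => rw [Function.iterate_succ_apply, gaussMap_cfVal, ih]; rfl

lemma cfDigit_cfVal (a : ℕ → ℕ+) (k : ℕ) : cfDigit (cfVal a) k = a k := by
  obtain ⟨h0, h1⟩ := cfVal_mem_Ioo fun j => a (j + 1 + k)
  rw [cfDigit, iterate_gaussMap_cfVal, cfVal_eq_inv_add, inv_inv, zero_add,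
    Nat.floor_eq_iff (by positivity)]
  constructor <;> linarith

lemma cfVal_irrational (a : ℕ → ℕ+) : Irrational (cfVal a) := by
  -- infinite descent: the Gauss map strictly decreases numerators of positive rationals
  suffices h : ∀ (n : ℕ) (a : ℕ → ℕ+) (q : ℚ), q.num < n → cfVal a ≠ q from
    fun ⟨q, hq⟩ => h (q.num.toNat + 1) a q (by omega) hq.symm
  intro n
  induction n with
  | zero =>
    intro a q hq heq
    have : (q : ℝ) < 0 := Rat.cast_lt_zero.2 (Rat.num_neg.1 (by exact_mod_cast hq))
    linarith [cfVal_pos a]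
  | succ n ih =>
    intro a q hq heq
    have hq0 : 0 < q := Rat.cast_pos.1 (heq ▸ cfVal_pos a)
    refine ih (fun k => a (k + 1)) (Int.fract q⁻¹) ?_ ?_
    · have := Rat.fract_inv_num_lt_num_of_pos hq0; push_cast at hq ⊢; omega
    · rw [← gaussMap_cfVal, heq, gaussMap, if_neg (by exact_mod_cast hq0.ne'), Rat.cast_fract,
        Rat.cast_inv]

instance : DiscreteMeasurableSpace ℕ+ := ⟨fun _ => trivial⟩

lemma measurable_comp_apply {β : Type*} [MeasurableSpace β] (g : ℕ+ → β) (k : ℕ) :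
    Measurable fun a : ℕ → ℕ+ => g (a k) :=
  Measurable.of_discrete.comp (measurable_pi_apply k)

lemma measurable_cfApprox (n : ℕ) : Measurable (cfApprox n) := by
  induction n with
  | zero => exact measurable_const
  | succ n ih =>
    exact ((measurable_comp_apply (fun i : ℕ+ => ((i : ℕ) : ℝ)) 0).add
      (ih.comp (measurable_pi_lambda _ fun k => measurable_pi_apply (k + 1)))).inv

lemma measurable_cfVal : Measurable cfVal :=
  measurable_of_tendsto_metrizable measurable_cfApprox (tendsto_pi_nhds.2 tendsto_cfApprox)

lemma cfDigit_gaussMap (x : ℝ) (k : ℕ) : cfDigit (gaussMap x) k = cfDigit x (k + 1) := by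
  rw [cfDigit, cfDigit, Function.iterate_succ_apply]

lemma gaussMap_of_ne_zero {x : ℝ} (hx : x ≠ 0) : gaussMap x = Int.fract x⁻¹ := if_neg hx

lemma Irrational.gaussMap {x : ℝ} (hx : Irrational x) : Irrational (gaussMap x) := by
  rw [gaussMap_of_ne_zero hx.ne_zero, Int.fract]
  exact hx.inv.sub_intCast _

lemma gaussMap_mem_Ioo {x : ℝ} (hx : Irrational x) : gaussMap x ∈ Ioo (0 : ℝ) 1 := by
  have hT := hx.gaussMap
  rw [gaussMap_of_ne_zero hx.ne_zero] at hT ⊢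
  exact ⟨(Int.fract_nonneg _).lt_of_ne' hT.ne_zero, Int.fract_lt_one _⟩

lemma inv_cfDigit_add_gaussMap {x : ℝ} (hx : 0 < x) :
    ((cfDigit x 0 : ℝ) + gaussMap x)⁻¹ = x := by
  rw [cfDigit, Function.iterate_zero_apply, gaussMap_of_ne_zero hx.ne',
    natCast_floor_eq_intCast_floor (by positivity), Int.floor_add_fract, inv_inv]

lemma one_le_cfDigit_zero {x : ℝ} (hx : x ∈ Ioo (0 : ℝ) 1) : 1 ≤ cfDigit x 0 :=
  Nat.one_le_floor_iff _ |>.2 (one_le_inv₀ hx.1 |>.2 hx.2.le)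

lemma abs_sub_le_abs_gaussMap_sub {y z : ℝ} (hy : y ∈ Ioo (0 : ℝ) 1) (hz : z ∈ Ioo (0 : ℝ) 1)
    (hyirr : Irrational y) (hzirr : Irrational z) (h : cfDigit y 0 = cfDigit z 0) :
    |y - z| ≤ |gaussMap y - gaussMap z| / (cfDigit z 0 : ℝ) ^ 2 := by
  conv_lhs => rw [← inv_cfDigit_add_gaussMap hy.1, ← inv_cfDigit_add_gaussMap hz.1, h]
  exact abs_inv_add_sub_inv_add_le (by exact_mod_cast one_le_cfDigit_zero hz)
    (gaussMap_mem_Ioo hyirr).1.le (gaussMap_mem_Ioo hzirr).1.le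

lemma abs_sub_le_of_cfDigit_eq (n : ℕ) {y z : ℝ} (hy : y ∈ Ioo (0 : ℝ) 1)
    (hz : z ∈ Ioo (0 : ℝ) 1) (hyirr : Irrational y) (hzirr : Irrational z)
    (h : ∀ k ≤ n, cfDigit y k = cfDigit z k) : |y - z| ≤ ((cfDigit z n : ℝ) ^ 2)⁻¹ := by
  induction n generalizing y z with
  | zero =>
    have hT : |gaussMap y - gaussMap z| ≤ 1 := by
      obtain ⟨h0, h1⟩ := gaussMap_mem_Ioo hyirr
      obtain ⟨h0', h1'⟩ := gaussMap_mem_Ioo hzirr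
      rw [abs_le]; constructor <;> linarith
    calc |y - z| ≤ |gaussMap y - gaussMap z| / (cfDigit z 0 : ℝ) ^ 2 :=
          abs_sub_le_abs_gaussMap_sub hy hz hyirr hzirr (h 0 le_rfl)
      _ ≤ ((cfDigit z 0 : ℝ) ^ 2)⁻¹ := by
          rw [div_eq_mul_inv]; exact mul_le_of_le_one_left (by positivity) hT
  | succ n ih =>
    have hd : (1 : ℝ) ≤ (cfDigit z 0 : ℝ) ^ 2 :=
      one_le_pow₀ (by exact_mod_cast one_le_cfDigit_zero hz)
    calc |y - z| ≤ |gaussMap y - gaussMap z| / (cfDigit z 0 : ℝ) ^ 2 :=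
          abs_sub_le_abs_gaussMap_sub hy hz hyirr hzirr (h 0 (Nat.zero_le _))
      _ ≤ |gaussMap y - gaussMap z| := div_le_self (abs_nonneg _) hd
      _ ≤ ((cfDigit z (n + 1) : ℝ) ^ 2)⁻¹ := by
          rw [← cfDigit_gaussMap]
          refine ih (gaussMap_mem_Ioo hyirr) (gaussMap_mem_Ioo hzirr) hyirr.gaussMap
            hzirr.gaussMap fun k hk => ?_
          simpa only [cfDigit_gaussMap] using h (k + 1) (by omega)

lemma diam_levelCyl_succ_le (n : ℕ) (x : ℝ) :
    Metric.diam (levelCyl (n + 1) x) ≤ ((cfDigit x n : ℝ) ^ 2)⁻¹ := by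
  refine Metric.diam_le_of_forall_dist_le (by positivity) ?_
  rintro y ⟨hy, hyirr, hyx⟩ z ⟨hz, hzirr, hzx⟩
  rw [Real.dist_eq, ← hzx n n.lt_succ_self]
  exact abs_sub_le_of_cfDigit_eq n hy hz hyirr hzirr fun k hk =>
    (hyx k (by omega)).trans (hzx k (by omega)).symm

lemma cfVal_mem_Eset {lam : ℝ} (hlam : 0 ≤ lam) {a : ℕ → ℕ+}
    (h : ∃ᶠ k in atTop, lam * k ≤ Real.log (a k : ℕ)) : cfVal a ∈ Eset lam := by
  refine ⟨cfVal_mem_Ioo a, cfVal_irrational a, fun j => ?_⟩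
  obtain ⟨k, hjk, hk⟩ := frequently_atTop.1 h (j + 1)
  have hk1 : (1 : ℝ) ≤ k := by exact_mod_cast (show 1 ≤ k by omega)
  refine ⟨k + 1, by omega, ?_⟩
  have ha : (0 : ℝ) < (a k : ℕ) := by positivity
  calc Metric.diam (levelCyl (k + 1) (cfVal a)) ≤ ((cfDigit (cfVal a) k : ℝ) ^ 2)⁻¹ :=
        diam_levelCyl_succ_le k _
    _ = Real.exp (-(2 * Real.log (a k : ℕ))) := by
        rw [cfDigit_cfVal, Real.exp_neg, ← Real.log_rpow ha, Real.exp_log (by positivity)]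
        norm_cast
    _ ≤ Real.exp (-lam * (k + 1 : ℕ)) := Real.exp_le_exp.2 (by push_cast; nlinarith)

lemma neg_log_cfVal_le (a : ℕ → ℕ+) : -Real.log (cfVal a) ≤ Real.log 2 + Real.log (a 0 : ℕ) := by
  have ha := one_le_pnat_cast (a 0)
  have hc := cfVal_mem_Icc fun k => a (k + 1)
  rw [← Real.log_inv, cfVal_eq_inv_add, inv_inv, ← Real.log_mul two_ne_zero (by positivity)]
  exact Real.log_le_log (by linarith [hc.1]) (by linarith [hc.2])

lemma ofReal_le_tsum_indicator_natCast_le (x : ℝ) :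
    ENNReal.ofReal x ≤ ∑' k : ℕ, {y : ℝ | (k : ℝ) ≤ y}.indicator 1 x := by
  rcases le_or_gt x 0 with hx | hx
  · simp [ENNReal.ofReal_of_nonpos hx]
  calc ENNReal.ofReal x ≤ ((⌊x⌋₊ + 1 : ℕ) : ℝ≥0∞) := by
        rw [← ENNReal.ofReal_natCast]
        exact ENNReal.ofReal_le_ofReal (by push_cast; linarith [Nat.lt_floor_add_one x])
    _ = ∑ k ∈ Finset.range (⌊x⌋₊ + 1), {y : ℝ | (k : ℝ) ≤ y}.indicator 1 x := by
        rw [Finset.sum_congr rfl fun k hk => indicator_of_mem ?_ _]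
        · simp
        exact (Nat.cast_le.2 (Nat.lt_succ_iff.1 (Finset.mem_range.1 hk))).trans
          (Nat.floor_le hx.le)
    _ ≤ _ := ENNReal.sum_le_tsum _

lemma lintegral_ofReal_le_tsum_measure_natCast_le {Ω : Type*} [MeasurableSpace Ω]
    (μ : Measure Ω) {f : Ω → ℝ} (hf : Measurable f) :
    ∫⁻ ω, ENNReal.ofReal (f ω) ∂μ ≤ ∑' k : ℕ, μ {ω | (k : ℝ) ≤ f ω} := by
  have hmeas : ∀ k : ℕ, MeasurableSet {ω | (k : ℝ) ≤ f ω} := fun k =>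
    measurableSet_le measurable_const hf
  simp_rw [← lintegral_indicator_one (hmeas _)]
  rw [← lintegral_tsum fun k => (measurable_one.indicator (hmeas k)).aemeasurable]
  exact lintegral_mono fun ω => ofReal_le_tsum_indicator_natCast_le (f ω)

lemma measurableSet_coord_mem (k : ℕ) (B : Set ℕ+) : MeasurableSet {a : ℕ → ℕ+ | a k ∈ B} :=
  measurable_pi_apply k MeasurableSet.of_discrete

noncomputable def IsProbVec.toPMF {p : ℕ+ → ℝ} (hp : IsProbVec p) : PMF ℕ+ :=
  ⟨fun i => ENNReal.ofReal (p i), ENNReal.summable.hasSum_iff.2 <| by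
    rw [← ENNReal.ofReal_tsum_of_nonneg hp.1 hp.2.summable, hp.2.tsum_eq, ENNReal.ofReal_one]⟩

namespace IsBernoulli

variable {p : ℕ+ → ℝ} {m : Measure (ℕ → ℕ+)}

lemma isProbabilityMeasure (hb : IsBernoulli p m) : IsProbabilityMeasure m :=
  ⟨by simpa using hb 0 fun _ => 1⟩

lemma map_restrict_eq_pi (hp : IsProbVec p) (hb : IsBernoulli p m) (n : ℕ) :
    m.map (fun (a : ℕ → ℕ+) (k : Fin n) => a k) = Measure.pi fun _ => hp.toPMF.toMeasure := by
  refine Measure.ext_of_singleton fun v => ?_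
  let w : ℕ → ℕ+ := fun j => if h : j < n then v ⟨j, h⟩ else 1
  have hpre : (fun (a : ℕ → ℕ+) (k : Fin n) => a k) ⁻¹' {v} = {a | ∀ k < n, a k = w k} := by
    ext a
    simp only [mem_preimage, mem_singleton_iff, mem_ofPred_eq, funext_iff, w]
    exact ⟨fun h k hk => by rw [dif_pos hk, ← h ⟨k, hk⟩], fun h k => by rw [h k k.2, dif_pos k.2]⟩
  rw [Measure.map_apply (measurable_pi_lambda _ fun k => measurable_pi_apply _)
    (measurableSet_singleton v), hpre, hb, ← univ_pi_singleton, Measure.pi_pi,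
    ENNReal.ofReal_prod_of_nonneg fun k _ => hp.1 _, ← Fin.prod_univ_eq_prod_range]
  refine Finset.prod_congr rfl fun k _ => ?_
  rw [PMF.toMeasure_apply_singleton _ _ (measurableSet_singleton _)]
  simp only [w, Fin.is_lt, dif_pos, Fin.eta]
  rfl

lemma measure_biInter_coord_mem (hp : IsProbVec p) (hb : IsBernoulli p m) (s : Finset ℕ)
    (B : ℕ → Set ℕ+) :
    m (⋂ k ∈ s, {a | a k ∈ B k}) = ∏ k ∈ s, hp.toPMF.toMeasure (B k) := by
  classical
  obtain ⟨n, hn⟩ := s.exists_nat_subset_range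
  let C : Fin n → Set ℕ+ := fun k => if (k : ℕ) ∈ s then B k else univ
  have hpre :
      ⋂ k ∈ s, {a | a k ∈ B k} = (fun (a : ℕ → ℕ+) (k : Fin n) => a k) ⁻¹' univ.pi C := by
    ext a
    simp only [mem_iInter, mem_ofPred_eq, mem_preimage, mem_univ_pi, C]
    refine ⟨fun h k => ?_, fun h k hk => ?_⟩
    · split_ifs with hk
      exacts [h k hk, mem_univ _]
    · simpa [hk] using h ⟨k, Finset.mem_range.1 (hn hk)⟩
  rw [hpre, ← Measure.map_apply (measurable_pi_lambda _ fun k => measurable_pi_apply _)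
    (MeasurableSet.of_discrete), map_restrict_eq_pi hp hb, Measure.pi_pi]
  calc ∏ k : Fin n, hp.toPMF.toMeasure (C k)
      = ∏ k ∈ Finset.range n, if k ∈ s then hp.toPMF.toMeasure (B k) else 1 := by
        rw [← Fin.prod_univ_eq_prod_range]
        refine Finset.prod_congr rfl fun k _ => ?_
        simp only [C, apply_ite hp.toPMF.toMeasure, measure_univ]
    _ = ∏ k ∈ s, hp.toPMF.toMeasure (B k) := by
        rw [Finset.prod_ite_mem, Finset.inter_eq_right.2 hn]

lemma measure_coord_mem (hp : IsProbVec p) (hb : IsBernoulli p m) (k : ℕ) (B : Set ℕ+) :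
    m {a | a k ∈ B} = hp.toPMF.toMeasure B := by
  simpa using hb.measure_biInter_coord_mem hp {k} fun _ => B

lemma iIndepSet_coord_mem (hp : IsProbVec p) (hb : IsBernoulli p m) (B : ℕ → Set ℕ+) :
    iIndepSet (fun k => {a | a k ∈ B k}) m := by
  rw [iIndepSet_iff_meas_biInter fun k => measurableSet_coord_mem k (B k)]
  intro s
  simp only [hb.measure_biInter_coord_mem hp, hb.measure_coord_mem hp]
lemma lintegral_log_digit_eq_top (hb : IsBernoulli p m)
    (hlyap : ∫⁻ x, ENNReal.ofReal (-(2 * Real.log x)) ∂(m.map cfVal) = ⊤) :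
    ∫⁻ a, ENNReal.ofReal (Real.log (a 0 : ℕ)) ∂m = ⊤ := by
  have := hb.isProbabilityMeasure
  have hlog : Measurable fun a : ℕ → ℕ+ => ENNReal.ofReal (Real.log (a 0 : ℕ)) :=
    measurable_comp_apply (fun i : ℕ+ => ENNReal.ofReal (Real.log (i : ℕ))) 0
  rw [lintegral_map (by fun_prop) measurable_cfVal] at hlyap
  have hle : ∀ a, ENNReal.ofReal (-(2 * Real.log (cfVal a)))
      ≤ ENNReal.ofReal (2 * Real.log 2) + 2 * ENNReal.ofReal (Real.log (a 0 : ℕ)) := fun a => by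
    rw [← ENNReal.ofReal_ofNat 2, ← ENNReal.ofReal_mul zero_le_two,
      ← ENNReal.ofReal_add (by positivity) (by positivity [one_le_pnat_cast (a 0)])]
    exact ENNReal.ofReal_le_ofReal (by linarith [neg_log_cfVal_le a])
  by_contra hfin
  refine (lt_of_le_of_lt (lintegral_mono hle) ?_).ne hlyap
  rw [lintegral_add_left measurable_const, lintegral_const_mul _ hlog, lintegral_const,
    measure_univ, mul_one]
  exact ENNReal.add_lt_top.2
    ⟨ENNReal.ofReal_lt_top, ENNReal.mul_lt_top (by simp) (lt_top_iff_ne_top.2 hfin)⟩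

lemma tsum_measure_log_coord_ge_eq_top (hp : IsProbVec p) (hb : IsBernoulli p m)
    (hlyap : ∫⁻ x, ENNReal.ofReal (-(2 * Real.log x)) ∂(m.map cfVal) = ⊤) {lam : ℝ}
    (hlam : 0 < lam) : ∑' k : ℕ, m {a | lam * k ≤ Real.log (a k : ℕ)} = ⊤ := by
  have hshift : ∀ k : ℕ, m {a | lam * k ≤ Real.log (a k : ℕ)}
      = m {a | (k : ℝ) ≤ lam⁻¹ * Real.log (a 0 : ℕ)} := fun k => by
    simp_rw [← div_eq_inv_mul, le_div_iff₀' hlam]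
    exact (hb.measure_coord_mem hp k {i | lam * k ≤ Real.log (i : ℕ)}).trans
      (hb.measure_coord_mem hp 0 _).symm
  simp_rw [hshift]
  refine top_le_iff.1 <| le_trans ?_ (lintegral_ofReal_le_tsum_measure_natCast_le m
    (measurable_comp_apply (fun i : ℕ+ => lam⁻¹ * Real.log (i : ℕ)) 0))
  simp_rw [ENNReal.ofReal_mul (inv_nonneg.2 hlam.le)]
  rw [lintegral_const_mul _
      (measurable_comp_apply (fun i : ℕ+ => ENNReal.ofReal (Real.log (i : ℕ))) 0),
    hb.lintegral_log_digit_eq_top hlyap, ENNReal.mul_top (by simpa using hlam)]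

end IsBernoulli

theorem Eset_full_of_infinite_lyapunov_general
    (p : ℕ+ → ℝ) (m : Measure (ℕ → ℕ+))
    (hp : IsProbVec p) (hb : IsBernoulli p m)
    (hlyap : ∫⁻ x, ENNReal.ofReal (-(2 * Real.log x)) ∂(m.map cfVal) = ⊤) :
    ∀ lam : ℝ, 0 < lam → (m.map cfVal) (Eset lam) = 1 := by
  intro lam hlam
  let large : ℕ → Set ℕ+ := fun k => {i | lam * k ≤ Real.log (i : ℕ)}
  have borelCantelli : m (limsup (fun k => {a | a k ∈ large k}) atTop) = 1 :=
    measure_limsup_eq_one (fun k => measurableSet_coord_mem k _) (hb.iIndepSet_coord_mem hp _)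
      (hb.tsum_measure_log_coord_ge_eq_top hp hlyap hlam)
  have := hb.isProbabilityMeasure
  have := Measure.isProbabilityMeasure_map (μ := m) measurable_cfVal.aemeasurable
  refine le_antisymm prob_le_one ?_
  calc 1 = m (limsup (fun k => {a | a k ∈ large k}) atTop) := borelCantelli.symm
    _ ≤ m (cfVal ⁻¹' Eset lam) :=
        measure_mono fun a ha => cfVal_mem_Eset hlam.le (mem_limsup_iff_frequently_mem.1 ha)
    _ ≤ (m.map cfVal) (Eset lam) := Measure.le_map_apply measurable_cfVal.aemeasurable _

/-- If the Lyapunov exponent `∫ log |T'| dμ_p = ∫ -2 log x dμ_p` is infinite, then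
for every `λ > 0` the set `E_λ` has full `μ_p`-measure. -/
theorem Eset_full_of_infinite_lyapunov
    (p : ℕ+ → ℝ) (m : Measure (ℕ → ℕ+))
    (hp : IsProbVec p) (hm : IsProbabilityMeasure m) (hb : IsBernoulli p m)
    (hlyap : ∫⁻ x, ENNReal.ofReal (-(2 * Real.log x)) ∂(m.map cfVal) = ⊤) :
    ∀ lam : ℝ, 0 < lam → (m.map cfVal) (Eset lam) = 1 :=
  Eset_full_of_infinite_lyapunov_general p m hp hb hlyap
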